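/- arXiv:2209.04600 — 2 statements merged into one kernel-verified Lean document; each statement's English description precedes it below -/
import Mathlib

section
/- Let V₁ and V₂ be commuting isometries on a complex Hilbert space H such that at least one of V₁, V₂ is pure (i.e., ‖(Vᵢ*)ⁿh‖ → 0 for all h ∈ H for some i), and let C := I − V₁V₁* − V₂V₂* + (V₁V₂)(V₁V₂)*. Then C = 0 if and only if C ≤ 0 (i.e., −C is a positive operator). -/
/-!
Write `D := 1 - V₁V₁*`, the projection onto `ker V₁*`. Commutativity gives
`C = D - V₂ D V₂*`, so `C ≤ 0` says `D ≤ V₂ D V₂*`. Iterating,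
`⟪D x, x⟫ ≤ ⟪D V₂*ⁿ x, V₂*ⁿ x⟫ ≤ ‖D‖ ‖V₂*ⁿ x‖² → 0` when `V₂` is pure, so the positive
operator `D` vanishes, and with it `C`. The joint defect is symmetric in `V₁, V₂`, so either
one may be the pure isometry.
-/

open ContinuousLinearMap Filter RCLike
open scoped InnerProductSpace Topology

theorem isStarProjection_mul_star {R : Type*} [Monoid R] [StarMul R] {a : R}
    (ha : star a * a = 1) : IsStarProjection (a * star a) where
  isIdempotentElem := by
    rw [IsIdempotentElem, mul_assoc, ← mul_assoc (star a), ha, one_mul]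
  isSelfAdjoint := by
    rw [IsSelfAdjoint, star_mul, star_star]

def jointDefect {R : Type*} [Ring R] [StarRing R] (a b : R) : R :=
  1 - a * star a - b * star b + a * b * star (a * b)

section jointDefect

variable {R : Type*} [Ring R] [StarRing R] {a b : R}

theorem jointDefect_comm (h : a * b = b * a) : jointDefect a b = jointDefect b a := by
  rw [jointDefect, jointDefect, h, sub_right_comm]

theorem jointDefect_eq_sub_mul_mul_star (h : a * b = b * a) :
    jointDefect a b = (1 - a * star a) - b * (1 - a * star a) * star b := by
  rw [jointDefect, h, star_mul]
  noncomm_ring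

end jointDefect

section Hilbert

variable {𝕜 E : Type*} [RCLike 𝕜] [NormedAddCommGroup E] [InnerProductSpace 𝕜 E] [CompleteSpace E]

theorem re_inner_map_self_le_of_le_mul_mul_star {D T : E →L[𝕜] E} (hDT : D ≤ T * D * star T)
    (y : E) : re ⟪D y, y⟫_𝕜 ≤ re ⟪D (star T y), star T y⟫_𝕜 := by
  have h := hDT.re_inner_nonneg_left y
  rwa [sub_apply, inner_sub_left, map_sub, sub_nonneg, mul_apply_eq_comp, mul_apply_eq_comp,
    star_eq_adjoint, ← adjoint_inner_right T, ← star_eq_adjoint] at h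

theorem re_inner_map_self_nonpos_of_le_mul_mul_star {D T : E →L[𝕜] E} (hDT : D ≤ T * D * star T)
    (hT : ∀ x, Tendsto (fun n ↦ ‖(star T ^ n) x‖) atTop (𝓝 0)) (x : E) :
    re ⟪D x, x⟫_𝕜 ≤ 0 := by
  set f : ℕ → ℝ := fun n ↦ re ⟪D ((star T ^ n) x), (star T ^ n) x⟫_𝕜
  have hf : Monotone f := monotone_nat_of_le_succ fun n ↦ by
    simpa only [f, pow_succ', mul_apply_eq_comp] using
      re_inner_map_self_le_of_le_mul_mul_star hDT ((star T ^ n) x)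
  have hbound (n : ℕ) : f n ≤ ‖D‖ * ‖(star T ^ n) x‖ ^ 2 := calc
    f n ≤ ‖D ((star T ^ n) x)‖ * ‖(star T ^ n) x‖ := re_inner_le_norm _ _
    _ ≤ ‖D‖ * ‖(star T ^ n) x‖ * ‖(star T ^ n) x‖ := by gcongr; exact le_opNorm _ _
    _ = ‖D‖ * ‖(star T ^ n) x‖ ^ 2 := by ring
  have hlim : Tendsto (fun n ↦ ‖D‖ * ‖(star T ^ n) x‖ ^ 2) atTop (𝓝 0) := by
    simpa using (hT x).pow 2 |>.const_mul ‖D‖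
  simpa [f] using ge_of_tendsto' hlim fun n ↦ (hf n.zero_le).trans (hbound n)

theorem eq_zero_of_nonneg_of_le_mul_mul_star {D T : E →L[𝕜] E} (hD : 0 ≤ D)
    (hDT : D ≤ T * D * star T) (hT : ∀ x, Tendsto (fun n ↦ ‖(star T ^ n) x‖) atTop (𝓝 0)) :
    D = 0 := by
  refine le_antisymm ?_ hD
  rw [ContinuousLinearMap.le_def, zero_sub, isPositive_def']
  refine ⟨((nonneg_iff_isPositive D).mp hD).isSelfAdjoint.neg, fun x ↦ ?_⟩
  simpa [reApplyInnerSelf] using re_inner_map_self_nonpos_of_le_mul_mul_star hDT hT x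

theorem jointDefect_eq_zero_of_nonpos {V₁ V₂ : E →L[𝕜] E} (hV₁ : star V₁ * V₁ = 1)
    (hcomm : V₁ * V₂ = V₂ * V₁) (hV₂ : ∀ x, Tendsto (fun n ↦ ‖(star V₂ ^ n) x‖) atTop (𝓝 0))
    (hC : jointDefect V₁ V₂ ≤ 0) : jointDefect V₁ V₂ = 0 := by
  have hD : 0 ≤ 1 - V₁ * star V₁ := (nonneg_iff_isPositive _).mpr <|
    IsPositive.of_isStarProjection (isStarProjection_mul_star hV₁).one_sub
  rw [jointDefect_eq_sub_mul_mul_star hcomm] at hC ⊢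
  have hDT : 1 - V₁ * star V₁ ≤ V₂ * (1 - V₁ * star V₁) * star V₂ := by
    rwa [ContinuousLinearMap.le_def, zero_sub, neg_sub] at hC
  rw [eq_zero_of_nonneg_of_le_mul_mul_star hD hDT hV₂, mul_zero, zero_mul, sub_zero]

end Hilbert

/-- Let `V₁, V₂` be commuting isometries on a complex Hilbert space such that
at least one of `V₁, V₂` is pure, and let `C := I − V₁V₁* − V₂V₂* + (V₁V₂)(V₁V₂)*`.
Then `C = 0` if and only if `C ≤ 0` (i.e. `−C` is a positive operator). -/
theorem stmt9 {H : Type*} [NormedAddCommGroup H] [InnerProductSpace ℂ H] [CompleteSpace H]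
    (V₁ V₂ : H →L[ℂ] H)
    (hV₁ : adjoint V₁ ∘L V₁ = 1) (hV₂ : adjoint V₂ ∘L V₂ = 1)
    (hcomm : V₁ ∘L V₂ = V₂ ∘L V₁)
    (hpure : (∀ h : H, Filter.Tendsto
        (fun n : ℕ => ‖((adjoint V₁) ^ n) h‖) Filter.atTop (nhds 0)) ∨
      (∀ h : H, Filter.Tendsto
        (fun n : ℕ => ‖((adjoint V₂) ^ n) h‖) Filter.atTop (nhds 0)))
    (C : H →L[ℂ] H)
    (hC : C = 1 - V₁ ∘L adjoint V₁ - V₂ ∘L adjoint V₂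
        + (V₁ ∘L V₂) ∘L adjoint (V₁ ∘L V₂)) :
    C = 0 ↔ (-C).IsPositive := by
  simp only [← star_eq_adjoint, ← mul_def] at hV₁ hV₂ hcomm hpure hC
  rw [← nonneg_iff_isPositive, neg_nonneg]
  refine ⟨fun h ↦ h.le, fun hle ↦ ?_⟩
  obtain rfl : C = jointDefect V₁ V₂ := hC
  rcases hpure with hpure₁ | hpure₂
  · rw [jointDefect_comm hcomm] at hle ⊢
    exact jointDefect_eq_zero_of_nonpos hV₂ hcomm.symm hpure₁ hle
  · exact jointDefect_eq_zero_of_nonpos hV₁ hcomm hpure₂ hle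
end

section
/- Let V₁ and V₂ be commuting isometries on a complex Hilbert space H, W₁ := ker V₁*, F₂ := P_{W₁}V₂P_{W₁}, and let d₁ : H → H ⊕₂ H, d₁h = (−V₂h, V₁h), and d₂ : H ⊕₂ H → H, d₂(h₁,h₂) = V₁h₁ + V₂h₂. Then ker d₁ = {0}; and the pair (V₁,V₂) is jointly Fredholm if and only if the compression F₂ of V₂ to W₁ is Fredholm, that is: [ran d₂ is closed, dim(ker d₂ ∩ (ran d₁)ᗮ) < ∞, and dim((ran d₂)ᗮ) < ∞] holds if and only if [ran F₂ is closed, dim(ker F₂ ∩ W₁) < ∞, and dim({h ∈ W₁ : F₂*h = 0}) < ∞] holds; and in that case the indices agree: dim(ker F₂ ∩ W₁) − dim({h ∈ W₁ : F₂*h = 0}) = dim(ker d₂ ∩ (ran d₁)ᗮ) − dim((ran d₂)ᗮ). -/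
/-!
Write `P = 1 - V₁V₁*` for the projection onto `W₁ = ker V₁*`. Since `V₁*V₁ = 1` and `V₁V₂ = V₂V₁`,
the Fringe operator is `F₂ = P V₂`, and `P (V₁a + V₂b) = F₂ b`. Hence `ran d₂ = P⁻¹(ran F₂)` and
`ran F₂ = ran d₂ ∩ W₁`, so one range is closed iff the other is. The map `w ↦ (-V₁*V₂w, w)`
identifies `ker F₂ ∩ W₁` with the homology `ker d₂ ∩ (ran d₁)ᗮ = ker d₂ ∩ ker d₁*` at the middle of the Koszul complex,
and `(ran d₂)ᗮ = ker V₁* ∩ ker V₂* = ker F₂* ∩ W₁` because `F₂* = V₂*` on `W₁`.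
-/

open ContinuousLinearMap
open scoped InnerProductSpace

section Koszul

variable {𝕜 H : Type*} [RCLike 𝕜] [NormedAddCommGroup H] [InnerProductSpace 𝕜 H]
variable (V₁ V₂ : H →L[𝕜] H)

noncomputable def koszulD₁ : H →L[𝕜] WithLp 2 (H × H) :=
  (WithLp.prodContinuousLinearEquiv 2 𝕜 H H).symm ∘L (-V₂).prod V₁

noncomputable def koszulD₂ : WithLp 2 (H × H) →L[𝕜] H :=
  V₁ ∘L WithLp.fstL 2 𝕜 H H + V₂ ∘L WithLp.sndL 2 𝕜 H H

@[simp]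
lemma koszulD₁_apply (h : H) : koszulD₁ V₁ V₂ h = WithLp.toLp 2 (-V₂ h, V₁ h) := rfl

@[simp]
lemma koszulD₂_apply (p : WithLp 2 (H × H)) : koszulD₂ V₁ V₂ p = V₁ p.fst + V₂ p.snd := rfl

variable [CompleteSpace H]

noncomputable def wanderingProj : H →L[𝕜] H := 1 - V₁ ∘L adjoint V₁

noncomputable def fringe : H →L[𝕜] H := wanderingProj V₁ ∘L (V₂ ∘L wanderingProj V₁)

noncomputable def fringeToKoszul : H →L[𝕜] WithLp 2 (H × H) :=
  (WithLp.prodContinuousLinearEquiv 2 𝕜 H H).symm ∘L (-(adjoint V₁ ∘L V₂)).prod (1 : H →L[𝕜] H)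

@[simp]
lemma wanderingProj_apply (x : H) : wanderingProj V₁ x = x - V₁ (adjoint V₁ x) := rfl

@[simp]
lemma fringeToKoszul_apply (w : H) :
    fringeToKoszul V₁ V₂ w = WithLp.toLp 2 (-adjoint V₁ (V₂ w), w) := rfl

@[simp]
lemma adjoint_koszulD₁_apply (p : WithLp 2 (H × H)) :
    adjoint (koszulD₁ V₁ V₂) p = adjoint V₁ p.snd - adjoint V₂ p.fst :=
  ext_inner_right 𝕜 fun h => by
    simp only [adjoint_inner_left, koszulD₁_apply, WithLp.prod_inner_apply, WithLp.ofLp_fst,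
      WithLp.ofLp_snd, inner_neg_right, inner_sub_left]
    ring

@[simp]
lemma adjoint_koszulD₂_apply (x : H) :
    adjoint (koszulD₂ V₁ V₂) x = WithLp.toLp 2 (adjoint V₁ x, adjoint V₂ x) :=
  ext_inner_right 𝕜 fun p => by simp [adjoint_inner_left, inner_add_right]

variable {V₁ V₂}

lemma fringeToKoszul_injective : Function.Injective (fringeToKoszul V₁ V₂) :=
  fun _ _ h => congr(($h).snd)

lemma adjoint_apply_apply_of_adjoint_comp_self {V : H →L[𝕜] H} (hV : adjoint V ∘L V = 1) (x : H) :
    adjoint V (V x) = x := by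
  simpa using congr($hV x)

lemma adjoint_apply_adjoint_apply_comm (hcomm : V₁ ∘L V₂ = V₂ ∘L V₁) (x : H) :
    adjoint V₁ (adjoint V₂ x) = adjoint V₂ (adjoint V₁ x) := by
  simpa [adjoint_comp] using congr($(congr(adjoint $hcomm)) x).symm

lemma ker_koszulD₁ (hV₁ : adjoint V₁ ∘L V₁ = 1) :
    LinearMap.ker (koszulD₁ V₁ V₂ : H →ₗ[𝕜] WithLp 2 (H × H)) = ⊥ := by
  refine LinearMap.ker_eq_bot'.mpr fun h hh => ?_
  have : V₁ h = 0 := by simpa using congr(($hh).snd)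
  rw [← adjoint_apply_apply_of_adjoint_comp_self hV₁ h, this, map_zero]

lemma fringe_apply (hV₁ : adjoint V₁ ∘L V₁ = 1) (hcomm : V₁ ∘L V₂ = V₂ ∘L V₁) (y : H) :
    fringe V₁ V₂ y = wanderingProj V₁ (V₂ y) := by
  have hcomm' (z : H) : V₂ (V₁ z) = V₁ (V₂ z) := congr($hcomm z).symm
  simp [fringe, hcomm', adjoint_apply_apply_of_adjoint_comp_self hV₁]

lemma adjoint_fringe_apply (hcomm : V₁ ∘L V₂ = V₂ ∘L V₁) {x : H} (hx : adjoint V₁ x = 0) :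
    adjoint (fringe V₁ V₂) x = adjoint V₂ x := by
  simp [fringe, wanderingProj, adjoint_comp, adjoint_one, hx,
    adjoint_apply_adjoint_apply_comm hcomm x]

lemma adjoint_wanderingProj_apply (hV₁ : adjoint V₁ ∘L V₁ = 1) (x : H) :
    adjoint V₁ (wanderingProj V₁ x) = 0 := by
  simp [adjoint_apply_apply_of_adjoint_comp_self hV₁]

lemma wanderingProj_koszulD₂_apply (hV₁ : adjoint V₁ ∘L V₁ = 1) (hcomm : V₁ ∘L V₂ = V₂ ∘L V₁)
    (p : WithLp 2 (H × H)) :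
    wanderingProj V₁ (koszulD₂ V₁ V₂ p) = fringe V₁ V₂ p.snd := by
  simp [fringe_apply hV₁ hcomm, adjoint_apply_apply_of_adjoint_comp_self hV₁]

lemma koszulD₂_fringeToKoszul (hV₁ : adjoint V₁ ∘L V₁ = 1) (hcomm : V₁ ∘L V₂ = V₂ ∘L V₁) (w : H) :
    koszulD₂ V₁ V₂ (fringeToKoszul V₁ V₂ w) = fringe V₁ V₂ w := by
  simp only [fringeToKoszul_apply, koszulD₂_apply, WithLp.toLp_fst, WithLp.toLp_snd, map_neg,
    fringe_apply hV₁ hcomm, wanderingProj_apply]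
  abel

lemma ker_adjoint_koszulD₂ (hcomm : V₁ ∘L V₂ = V₂ ∘L V₁) :
    LinearMap.ker (adjoint (koszulD₂ V₁ V₂) : H →ₗ[𝕜] WithLp 2 (H × H)) =
      LinearMap.ker (adjoint (fringe V₁ V₂) : H →ₗ[𝕜] H) ⊓ LinearMap.ker (adjoint V₁ : H →ₗ[𝕜] H) := by
  ext x
  simp only [Submodule.mem_inf, LinearMap.mem_ker, coe_coe, adjoint_koszulD₂_apply,
    WithLp.toLp_eq_zero, Prod.mk_eq_zero]
  rw [and_comm]
  refine and_congr_left fun h₁ => ?_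
  rw [adjoint_fringe_apply hcomm h₁]

lemma map_fringeToKoszul (hV₁ : adjoint V₁ ∘L V₁ = 1) (hV₂ : adjoint V₂ ∘L V₂ = 1)
    (hcomm : V₁ ∘L V₂ = V₂ ∘L V₁) :
    (LinearMap.ker (fringe V₁ V₂ : H →ₗ[𝕜] H) ⊓ LinearMap.ker (adjoint V₁ : H →ₗ[𝕜] H)).map
        (fringeToKoszul V₁ V₂ : H →ₗ[𝕜] WithLp 2 (H × H)) =
      LinearMap.ker (koszulD₂ V₁ V₂ : WithLp 2 (H × H) →ₗ[𝕜] H) ⊓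
        LinearMap.ker (adjoint (koszulD₁ V₁ V₂) : WithLp 2 (H × H) →ₗ[𝕜] H) := by
  have hA₁ := adjoint_apply_apply_of_adjoint_comp_self hV₁
  have hA₂ := adjoint_apply_apply_of_adjoint_comp_self hV₂
  have hAc := adjoint_apply_adjoint_apply_comm hcomm
  ext p
  simp only [Submodule.mem_map, Submodule.mem_inf, LinearMap.mem_ker, coe_coe,
    adjoint_koszulD₁_apply, sub_eq_zero]
  constructor
  · rintro ⟨w, ⟨hFw, hw⟩, rfl⟩
    refine ⟨by rw [koszulD₂_fringeToKoszul hV₁ hcomm, hFw], ?_⟩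
    simp [← hAc, hA₂, hw]
  · rintro ⟨hd₂, hd₁⟩
    have ha : p.fst = -adjoint V₁ (V₂ p.snd) := by
      have := congr(adjoint V₁ $hd₂)
      simp only [koszulD₂_apply, map_add, hA₁, map_zero] at this
      exact eq_neg_of_add_eq_zero_left this
    have hb : adjoint V₁ p.snd = 0 := by
      have : IsAddTorsionFree H := .of_isTorsionFree 𝕜 H
      have : adjoint V₂ p.fst = -adjoint V₁ p.snd := by rw [ha, map_neg, ← hAc, hA₂]
      exact self_eq_neg.mp (hd₁.trans this)
    have hp : fringeToKoszul V₁ V₂ p.snd = p := by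
      rw [fringeToKoszul_apply, ← ha]
      rfl
    refine ⟨p.snd, ⟨?_, hb⟩, hp⟩
    rw [← koszulD₂_fringeToKoszul hV₁ hcomm, hp, hd₂]

noncomputable def fringeKerEquiv (hV₁ : adjoint V₁ ∘L V₁ = 1) (hV₂ : adjoint V₂ ∘L V₂ = 1)
    (hcomm : V₁ ∘L V₂ = V₂ ∘L V₁) :
    ↥(LinearMap.ker (fringe V₁ V₂ : H →ₗ[𝕜] H) ⊓ LinearMap.ker (adjoint V₁ : H →ₗ[𝕜] H)) ≃ₗ[𝕜]
      ↥(LinearMap.ker (koszulD₂ V₁ V₂ : WithLp 2 (H × H) →ₗ[𝕜] H) ⊓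
        LinearMap.ker (adjoint (koszulD₁ V₁ V₂) : WithLp 2 (H × H) →ₗ[𝕜] H)) :=
  (Submodule.equivMapOfInjective _ fringeToKoszul_injective _).trans
    (LinearEquiv.ofEq _ _ (map_fringeToKoszul hV₁ hV₂ hcomm))

lemma range_fringe (hV₁ : adjoint V₁ ∘L V₁ = 1) (hcomm : V₁ ∘L V₂ = V₂ ∘L V₁) :
    LinearMap.range (fringe V₁ V₂ : H →ₗ[𝕜] H) =
      LinearMap.range (koszulD₂ V₁ V₂ : WithLp 2 (H × H) →ₗ[𝕜] H) ⊓
        LinearMap.ker (adjoint V₁ : H →ₗ[𝕜] H) := by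
  apply le_antisymm
  · rintro _ ⟨y, rfl⟩
    refine ⟨⟨fringeToKoszul V₁ V₂ y, koszulD₂_fringeToKoszul hV₁ hcomm y⟩, ?_⟩
    show adjoint V₁ (fringe V₁ V₂ y) = 0
    rw [fringe_apply hV₁ hcomm, adjoint_wanderingProj_apply hV₁]
  · rintro _ ⟨⟨p, rfl⟩, hp : adjoint V₁ (koszulD₂ V₁ V₂ p) = 0⟩
    refine ⟨p.snd, ?_⟩
    rw [coe_coe, ← wanderingProj_koszulD₂_apply hV₁ hcomm, wanderingProj_apply, hp, map_zero, sub_zero]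
    rfl

lemma range_koszulD₂ (hV₁ : adjoint V₁ ∘L V₁ = 1) (hcomm : V₁ ∘L V₂ = V₂ ∘L V₁) :
    LinearMap.range (koszulD₂ V₁ V₂ : WithLp 2 (H × H) →ₗ[𝕜] H) =
      (LinearMap.range (fringe V₁ V₂ : H →ₗ[𝕜] H)).comap (wanderingProj V₁ : H →ₗ[𝕜] H) := by
  ext x
  simp only [Submodule.mem_comap, LinearMap.mem_range, coe_coe]
  constructor
  · rintro ⟨p, rfl⟩
    exact ⟨p.snd, (wanderingProj_koszulD₂_apply hV₁ hcomm p).symm⟩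
  · rintro ⟨y, hy⟩
    refine ⟨fringeToKoszul V₁ V₂ y + WithLp.toLp 2 (adjoint V₁ x, 0), ?_⟩
    rw [map_add, koszulD₂_fringeToKoszul hV₁ hcomm, hy]
    simp

lemma isClosed_range_koszulD₂_iff (hV₁ : adjoint V₁ ∘L V₁ = 1) (hcomm : V₁ ∘L V₂ = V₂ ∘L V₁) :
    IsClosed (LinearMap.range (koszulD₂ V₁ V₂ : WithLp 2 (H × H) →ₗ[𝕜] H) : Set H) ↔
      IsClosed (LinearMap.range (fringe V₁ V₂ : H →ₗ[𝕜] H) : Set H) := by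
  refine ⟨fun h => ?_, fun h => ?_⟩
  · rw [range_fringe hV₁ hcomm, Submodule.coe_inf]
    exact h.inter (adjoint V₁).isClosed_ker
  · rw [range_koszulD₂ hV₁ hcomm, Submodule.comap_coe]
    exact h.preimage (wanderingProj V₁).continuous

end Koszul

/-- Let `V₁, V₂` be commuting isometries on a complex Hilbert space `H`,
`W₁ := ker V₁*`, `F₂ := P_{W₁}V₂P_{W₁}`, and let `d₁h = (−V₂h, V₁h)`,
`d₂(h₁,h₂) = V₁h₁ + V₂h₂` be the Koszul boundary maps. Then `ker d₁ = {0}`; the pair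
`(V₁,V₂)` is jointly Fredholm iff the Fringe operator `F₂` is Fredholm on `W₁`; and in that
case the indices agree. -/
theorem stmt16 {H : Type*} [NormedAddCommGroup H] [InnerProductSpace ℂ H] [CompleteSpace H]
    (V₁ V₂ : H →L[ℂ] H)
    (hV₁ : adjoint V₁ ∘L V₁ = 1) (hV₂ : adjoint V₂ ∘L V₂ = 1)
    (hcomm : V₁ ∘L V₂ = V₂ ∘L V₁)
    (F₂ : H →L[ℂ] H)
    (hF₂ : F₂ = (1 - V₁ ∘L adjoint V₁) ∘L (V₂ ∘L (1 - V₁ ∘L adjoint V₁)))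
    (d₁ : H →L[ℂ] WithLp 2 (H × H)) (d₂ : WithLp 2 (H × H) →L[ℂ] H)
    (hd₁ : ∀ h : H, d₁ h = (WithLp.equiv 2 (H × H)).symm (-(V₂ h), V₁ h))
    (hd₂ : ∀ p : WithLp 2 (H × H),
      d₂ p = V₁ (WithLp.equiv 2 (H × H) p).1 + V₂ (WithLp.equiv 2 (H × H) p).2) :
    LinearMap.ker (d₁ : H →ₗ[ℂ] WithLp 2 (H × H)) = ⊥ ∧
    ((IsClosed (LinearMap.range (d₂ : WithLp 2 (H × H) →ₗ[ℂ] H) : Set H) ∧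
        FiniteDimensional ℂ ↥(LinearMap.ker (d₂ : WithLp 2 (H × H) →ₗ[ℂ] H) ⊓ (LinearMap.range (d₁ : H →ₗ[ℂ] WithLp 2 (H × H)))ᗮ) ∧
        FiniteDimensional ℂ ↥((LinearMap.range (d₂ : WithLp 2 (H × H) →ₗ[ℂ] H))ᗮ)) ↔
      (IsClosed (LinearMap.range (F₂ : H →ₗ[ℂ] H) : Set H) ∧
        FiniteDimensional ℂ ↥(LinearMap.ker (F₂ : H →ₗ[ℂ] H) ⊓ LinearMap.ker (adjoint V₁ : H →ₗ[ℂ] H)) ∧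
        FiniteDimensional ℂ ↥(LinearMap.ker (adjoint F₂ : H →ₗ[ℂ] H) ⊓ LinearMap.ker (adjoint V₁ : H →ₗ[ℂ] H)))) ∧
    ((IsClosed (LinearMap.range (d₂ : WithLp 2 (H × H) →ₗ[ℂ] H) : Set H) ∧
        FiniteDimensional ℂ ↥(LinearMap.ker (d₂ : WithLp 2 (H × H) →ₗ[ℂ] H) ⊓ (LinearMap.range (d₁ : H →ₗ[ℂ] WithLp 2 (H × H)))ᗮ) ∧
        FiniteDimensional ℂ ↥((LinearMap.range (d₂ : WithLp 2 (H × H) →ₗ[ℂ] H))ᗮ)) →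
      (Module.finrank ℂ ↥(LinearMap.ker (F₂ : H →ₗ[ℂ] H) ⊓ LinearMap.ker (adjoint V₁ : H →ₗ[ℂ] H)) : ℤ) -
          (Module.finrank ℂ ↥(LinearMap.ker (adjoint F₂ : H →ₗ[ℂ] H) ⊓ LinearMap.ker (adjoint V₁ : H →ₗ[ℂ] H)) : ℤ) =
        (Module.finrank ℂ ↥(LinearMap.ker (d₂ : WithLp 2 (H × H) →ₗ[ℂ] H) ⊓ (LinearMap.range (d₁ : H →ₗ[ℂ] WithLp 2 (H × H)))ᗮ) : ℤ) -
          (Module.finrank ℂ ↥((LinearMap.range (d₂ : WithLp 2 (H × H) →ₗ[ℂ] H))ᗮ) : ℤ)) := by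
  obtain rfl : F₂ = fringe V₁ V₂ := hF₂
  obtain rfl : d₁ = koszulD₁ V₁ V₂ := ContinuousLinearMap.ext hd₁
  obtain rfl : d₂ = koszulD₂ V₁ V₂ := ContinuousLinearMap.ext hd₂
  let e := fringeKerEquiv hV₁ hV₂ hcomm
  rw [orthogonal_range, orthogonal_range, ker_adjoint_koszulD₂ hcomm]
  exact ⟨ker_koszulD₁ hV₁,
    and_congr (isClosed_range_koszulD₂_iff hV₁ hcomm)
      (and_congr (Module.Finite.equiv_iff e).symm Iff.rfl),
    fun _ => by rw [e.finrank_eq]⟩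
end
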